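/- Suppose gradient flow over a tabular policy is used to maximize the RLHF objective φ over a training set S. Then for any prompt x ∈ S, any subset of outputs A ⊆ Y, and any time T ≥ 0: π_{θ(T)}(A|x) ≤ π_{θ(0)}(A|x) · exp( (1/|S|) · (4 + 2λ · ln(1 / min_{y∈Y} π_{θ(0)}(y|x))) · T ), where π_θ(A|x) = Σ_{y∈A} π_θ(y|x). -/

import Mathlib

/-- A tabular policy: `π_θ(y|x) = softmax(θ_{:,x})_y` for parameters `θ ∈ ℝ^{Y×X}`. -/
noncomputable def tabPolicy {X Y : Type*} [Fintype Y]
    (θ : EuclideanSpace ℝ (Y × X)) (x : X) (y : Y) : ℝ :=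
  Real.exp (θ (y, x)) / ∑ y' : Y, Real.exp (θ (y', x))

/-- The RLHF objective for tabular policies. -/
noncomputable def rlhfObjTab {X Y : Type*} [Fintype X] [Fintype Y]
    (S : Finset X) (rRM : X → Y → ℝ) (lam : ℝ)
    (θref θ : EuclideanSpace ℝ (Y × X)) : ℝ :=
  (S.card : ℝ)⁻¹ * ∑ x ∈ S,
    ((∑ y : Y, tabPolicy θ x y * rRM x y) -
      lam * ∑ y : Y, tabPolicy θ x y * Real.log (tabPolicy θ x y / tabPolicy θref x y))

/-! Along the flow the logits of a prompt `x ∈ S` move with velocity `|S|⁻¹ π (g - 𝔼_π g)`,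
where `g = r - λ (log (π / π_ref) + 1)`, so `d/dt log π(y|x)` is `|S|⁻¹` times the rate
`π(y) (g y - 𝔼_π g) - 𝔼_π [π (g - 𝔼_π g)]`. With `m = min_y π_ref(y|x)`, the reward part of the rate
is at most `4` because `|r - 𝔼_π r| ≤ 2`, and the KL part at most `2 λ log (1 / m)` because every
log-ratio `log (π / π_ref)`, hence also `KL(π ‖ π_ref) ≥ 0`, is at most `log (1 / m)`. Thus
`d/dt π(A|x) ≤ C π(A|x)` for `C = |S|⁻¹ (4 + 2 λ log (1 / m))`, and Grönwall's inequality concludes. -/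

open Real Finset

lemma sum_mul_mul_sub_sum_mul_comm {Y : Type*} [Fintype Y] (p g v : Y → ℝ) :
    ∑ y, g y * (p y * (v y - ∑ y', p y' * v y')) = ∑ y, p y * (g y - ∑ y', p y' * g y') * v y := by
  have hl : ∑ y, g y * (p y * (v y - ∑ y', p y' * v y')) =
      ∑ y, p y * g y * v y - (∑ y, p y * g y) * ∑ y', p y' * v y' := by
    rw [sum_mul, ← sum_sub_distrib]
    exact sum_congr rfl fun y _ => by ring
  have hr : ∑ y, p y * (g y - ∑ y', p y' * g y') * v y =
      ∑ y, p y * g y * v y - (∑ y, p y * g y) * ∑ y', p y' * v y' := by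
    rw [mul_sum, ← sum_sub_distrib]
    exact sum_congr rfl fun y _ => by ring
  rw [hl, hr]

section ProbabilityVector

variable {Y : Type*} [Fintype Y] {p q r ℓ : Y → ℝ}

lemma le_one_of_sum_eq_one (hp : ∀ y, 0 ≤ p y) (hp1 : ∑ y, p y = 1) (y : Y) : p y ≤ 1 :=
  hp1 ▸ single_le_sum (fun y _ => hp y) (mem_univ y)

lemma sum_sq_le_one_of_sum_eq_one (hp : ∀ y, 0 ≤ p y) (hp1 : ∑ y, p y = 1) :
    ∑ y, p y ^ 2 ≤ 1 :=
  hp1 ▸ sum_le_sum fun y _ => by nlinarith [hp y, le_one_of_sum_eq_one hp hp1 y]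

lemma abs_sub_sum_mul_le_two (hp : ∀ y, 0 ≤ p y) (hp1 : ∑ y, p y = 1)
    (hr : ∀ y, r y ∈ Set.Icc (-1 : ℝ) 1) (y : Y) : |r y - ∑ y', p y' * r y'| ≤ 2 := by
  have hlo : -1 ≤ ∑ y', p y' * r y' := by
    calc (-1 : ℝ) = ∑ y', p y' * (-1) := by rw [← sum_mul, hp1]; ring
      _ ≤ _ := sum_le_sum fun y' _ => mul_le_mul_of_nonneg_left (hr y').1 (hp y')
  have hhi : ∑ y', p y' * r y' ≤ 1 := by
    calc ∑ y', p y' * r y' ≤ ∑ y', p y' * 1 :=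
          sum_le_sum fun y' _ => mul_le_mul_of_nonneg_left (hr y').2 (hp y')
      _ = 1 := by rw [← sum_mul, hp1, one_mul]
  rw [abs_le]
  constructor <;> linarith [(hr y).1, (hr y).2]

lemma sum_mul_log_div_nonneg (hp : ∀ y, 0 < p y) (hp1 : ∑ y, p y = 1) (hq : ∀ y, 0 < q y)
    (hq1 : ∑ y, q y = 1) : 0 ≤ ∑ y, p y * log (p y / q y) := by
  have h : ∀ y, -(p y * log (p y / q y)) ≤ q y - p y := fun y => by
    have hlog := mul_le_mul_of_nonneg_left (log_le_sub_one_of_pos (div_pos (hq y) (hp y))) (hp y).le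
    have hcancel : p y * (q y / p y - 1) = q y - p y := by field_simp [(hp y).ne']
    rw [← inv_div, log_inv, mul_neg, neg_neg]
    linarith
  have := sum_le_sum fun y (_ : y ∈ univ) => h y
  rw [sum_neg_distrib, sum_sub_distrib, hp1, hq1] at this
  linarith

lemma apply_sub_apply_le_one_sub {m : ℝ} (hp : ∀ y, 0 ≤ p y) (hp1 : ∑ y, p y = 1)
    (hq : ∀ y, 0 ≤ q y) (hq1 : ∑ y, q y = 1) (hm : ∀ y, m ≤ q y) (y : Y) :
    q y - p y ≤ 1 - m := by
  classical
  have hq_split := sum_erase_add univ q (mem_univ y)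
  rcases (univ.erase y).eq_empty_or_nonempty with hY | ⟨y', hy'⟩
  · have hp_split := sum_erase_add univ p (mem_univ y)
    rw [hY, sum_empty, zero_add] at hq_split hp_split
    linarith [hm y]
  · have := single_le_sum (fun z _ => hq z) hy'
    linarith [hm y', hp y]

/-- `d/dt log p(y)` for the softmax distribution `p` whose logits move with velocity
`p · (h - 𝔼_p h)`. -/
noncomputable def softmaxLogRate (p h : Y → ℝ) (y : Y) : ℝ :=
  p y * (h y - ∑ y', p y' * h y') - ∑ y', p y' ^ 2 * (h y' - ∑ y'', p y'' * h y'')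

lemma softmaxLogRate_sub_mul_add_one (hp1 : ∑ y, p y = 1) (c : ℝ) (y : Y) :
    softmaxLogRate p (fun y => r y - c * (ℓ y + 1)) y =
      softmaxLogRate p r y - c * softmaxLogRate p ℓ y := by
  set rbar := ∑ y', p y' * r y'
  set lbar := ∑ y', p y' * ℓ y'
  have hmean : ∑ y', p y' * (r y' - c * (ℓ y' + 1)) = rbar - c * (lbar + 1) := by
    calc ∑ y', p y' * (r y' - c * (ℓ y' + 1)) = ∑ y', (p y' * r y' - c * (p y' * ℓ y') - c * p y') :=
          sum_congr rfl fun y' _ => by ring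
      _ = rbar - c * (lbar + 1) := by
          rw [sum_sub_distrib, sum_sub_distrib, ← mul_sum, ← mul_sum, hp1]; ring
  have hsecond : ∑ y', p y' ^ 2 * (r y' - c * (ℓ y' + 1) - (rbar - c * (lbar + 1))) =
      ∑ y', p y' ^ 2 * (r y' - rbar) - c * ∑ y', p y' ^ 2 * (ℓ y' - lbar) := by
    rw [mul_sum, ← sum_sub_distrib]
    exact sum_congr rfl fun y' _ => by ring
  simp only [softmaxLogRate, hmean, hsecond]
  ring

lemma softmaxLogRate_le_four (hp : ∀ y, 0 ≤ p y) (hp1 : ∑ y, p y = 1)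
    (hr : ∀ y, r y ∈ Set.Icc (-1 : ℝ) 1) (y : Y) : softmaxLogRate p r y ≤ 4 := by
  have hdev := abs_sub_sum_mul_le_two hp hp1 hr
  have hfirst : p y * (r y - ∑ y', p y' * r y') ≤ 2 := by
    nlinarith [abs_le.mp (hdev y), hp y, le_one_of_sum_eq_one hp hp1 y]
  have hsecond : -2 ≤ ∑ y', p y' ^ 2 * (r y' - ∑ y'', p y'' * r y'') := by
    calc (-2 : ℝ) ≤ ∑ y', p y' ^ 2 * (-2) := by
          rw [← sum_mul]; linarith [sum_sq_le_one_of_sum_eq_one hp hp1]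
      _ ≤ _ := sum_le_sum fun y' _ =>
          mul_le_mul_of_nonneg_left (abs_le.mp (hdev y')).1 (sq_nonneg _)
  unfold softmaxLogRate
  linarith

/-- Both terms are at most `log (1 / m)`: `-p log (p / q) ≤ q - p ≤ 1 - m` for the first; the
second is `p(y) KL + 𝔼_p [p (log (p / q) - KL)]`, where `0 ≤ KL ≤ log (1 / m)` and every log-ratio
is at most `log (1 / m)`. -/
lemma neg_softmaxLogRate_log_div_le {m : ℝ} (hp : ∀ y, 0 < p y) (hp1 : ∑ y, p y = 1)
    (hq : ∀ y, 0 < q y) (hq1 : ∑ y, q y = 1) (hm0 : 0 < m) (hm : ∀ y, m ≤ q y) (y : Y) :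
    -softmaxLogRate p (fun y => log (p y / q y)) y ≤ 2 * log (1 / m) := by
  set L := log (1 / m)
  set kl := ∑ y', p y' * log (p y' / q y')
  have hp1' := le_one_of_sum_eq_one (fun y => (hp y).le) hp1
  have hlogratio : ∀ y', log (p y' / q y') ≤ L := fun y' =>
    log_le_log (div_pos (hp y') (hq y')) <|
      div_le_div₀ zero_le_one (hp1' y') hm0 (hm y')
  have hkl0 : 0 ≤ kl := sum_mul_log_div_nonneg hp hp1 hq hq1
  have hklL : kl ≤ L := by
    calc kl ≤ ∑ y', p y' * L := sum_le_sum fun y' _ =>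
          mul_le_mul_of_nonneg_left (hlogratio y') (hp y').le
      _ = L := by rw [← sum_mul, hp1, one_mul]
  have hfirst : -(p y * log (p y / q y)) ≤ L := by
    have hlog := mul_le_mul_of_nonneg_left
      (log_le_sub_one_of_pos (div_pos (hq y) (hp y))) (hp y).le
    have hcancel : p y * (q y / p y - 1) = q y - p y := by field_simp [(hp y).ne']
    have h1m : 1 - m ≤ L := by
      have hL : L = -log m := by simp only [L, one_div, log_inv]
      linarith [log_le_sub_one_of_pos hm0]
    rw [← inv_div, log_inv, mul_neg, neg_neg]
    linarith [apply_sub_apply_le_one_sub (fun y => (hp y).le) hp1 (fun y => (hq y).le) hq1 hm y]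
  have hsq := sum_sq_le_one_of_sum_eq_one (fun y => (hp y).le) hp1
  have hsecond : p y * kl + ∑ y', p y' ^ 2 * (log (p y' / q y') - kl) ≤ L := by
    have hsum : ∑ y', p y' ^ 2 * (log (p y' / q y') - kl) ≤ (∑ y', p y' ^ 2) * (L - kl) := by
      rw [sum_mul]
      exact sum_le_sum fun y' _ =>
        mul_le_mul_of_nonneg_left (by linarith [hlogratio y']) (sq_nonneg _)
    nlinarith [hp1' y, hp y]
  unfold softmaxLogRate
  linarith

lemma softmaxLogRate_le {m c : ℝ} (hc : 0 ≤ c) (hp : ∀ y, 0 < p y) (hp1 : ∑ y, p y = 1)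
    (hq : ∀ y, 0 < q y) (hq1 : ∑ y, q y = 1) (hm0 : 0 < m) (hm : ∀ y, m ≤ q y)
    (hr : ∀ y, r y ∈ Set.Icc (-1 : ℝ) 1) (y : Y) :
    softmaxLogRate p (fun y => r y - c * (log (p y / q y) + 1)) y ≤ 4 + 2 * c * log (1 / m) := by
  rw [softmaxLogRate_sub_mul_add_one hp1]
  have hreward := softmaxLogRate_le_four (fun y => (hp y).le) hp1 hr y
  have hkl := mul_le_mul_of_nonneg_left (neg_softmaxLogRate_log_div_le hp hp1 hq hq1 hm0 hm y) hc
  linarith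

end ProbabilityVector

lemma hasDerivAt_mul_log_div {u c : ℝ} (hu : 0 < u) (hc : 0 < c) :
    HasDerivAt (fun u => u * log (u / c)) (log (u / c) + 1) u := by
  have h := (hasDerivAt_id' u).fun_mul (((hasDerivAt_id' u).div_const c).log (div_pos hu hc).ne')
  refine h.congr_deriv ?_
  field_simp

lemma le_mul_exp_of_hasDerivAt_le_mul {f f' : ℝ → ℝ} {C T : ℝ}
    (hf : ∀ t, 0 ≤ t → HasDerivAt f (f' t) t) (hle : ∀ t, 0 ≤ t → f' t ≤ C * f t) (hT : 0 ≤ T) :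
    f T ≤ f 0 * exp (C * T) := by
  have hcont : ContinuousOn f (Set.Icc 0 T) := fun t ht =>
    (hf t ht.1).continuousAt.continuousWithinAt
  have := le_gronwallBound_of_liminf_deriv_right_le hcont
    (fun t ht _ hr => (hf t ht.1).hasDerivWithinAt.liminf_right_slope_le hr) le_rfl
    (fun t ht => (add_zero (C * f t)).symm ▸ hle t ht.1) T ⟨hT, le_rfl⟩
  rwa [gronwallBound_ε0, sub_zero] at this

section TabularPolicy

variable {X Y : Type*} [Fintype Y]

lemma sum_exp_pos [Nonempty Y] (θ : EuclideanSpace ℝ (Y × X)) (x : X) :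
    0 < ∑ y, exp (θ (y, x)) :=
  sum_pos (fun _ _ => exp_pos _) univ_nonempty

lemma tabPolicy_pos [Nonempty Y] (θ : EuclideanSpace ℝ (Y × X)) (x : X) (y : Y) :
    0 < tabPolicy θ x y :=
  div_pos (exp_pos _) (sum_exp_pos θ x)

lemma sum_tabPolicy [Nonempty Y] (θ : EuclideanSpace ℝ (Y × X)) (x : X) :
    ∑ y, tabPolicy θ x y = 1 := by
  simp only [tabPolicy]
  rw [← sum_div, div_self (sum_exp_pos θ x).ne']

noncomputable def tabPolicyFDeriv (θ : EuclideanSpace ℝ (Y × X)) (x : X) (y : Y) :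
    StrongDual ℝ (EuclideanSpace ℝ (Y × X)) :=
  tabPolicy θ x y •
    (EuclideanSpace.proj (y, x) - ∑ y', tabPolicy θ x y' • EuclideanSpace.proj (y', x))

lemma tabPolicyFDeriv_apply (θ v : EuclideanSpace ℝ (Y × X)) (x : X) (y : Y) :
    tabPolicyFDeriv θ x y v = tabPolicy θ x y * (v (y, x) - ∑ y', tabPolicy θ x y' * v (y', x)) := by
  simp [tabPolicyFDeriv]

/-- The partial derivative of the `x`-summand of the RLHF objective in `π_θ(y|x)`. -/
noncomputable def rlhfScore (rRM : X → Y → ℝ) (lam : ℝ) (θref θ : EuclideanSpace ℝ (Y × X))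
    (x : X) (y : Y) : ℝ :=
  rRM x y - lam * (log (tabPolicy θ x y / tabPolicy θref x y) + 1)

open Classical in
noncomputable def rlhfGrad (S : Finset X) (rRM : X → Y → ℝ) (lam : ℝ)
    (θref θ : EuclideanSpace ℝ (Y × X)) : EuclideanSpace ℝ (Y × X) :=
  WithLp.toLp 2 fun i => if i.2 ∈ S then
    (S.card : ℝ)⁻¹ * (tabPolicy θ i.2 i.1 * (rlhfScore rRM lam θref θ i.2 i.1 -
      ∑ y, tabPolicy θ i.2 y * rlhfScore rRM lam θref θ i.2 y))
  else 0

lemma rlhfGrad_apply_of_mem {S : Finset X} {x : X} (hx : x ∈ S) (rRM : X → Y → ℝ) (lam : ℝ)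
    (θref θ : EuclideanSpace ℝ (Y × X)) (y : Y) :
    rlhfGrad S rRM lam θref θ (y, x) = (S.card : ℝ)⁻¹ * (tabPolicy θ x y *
      (rlhfScore rRM lam θref θ x y - ∑ y', tabPolicy θ x y' * rlhfScore rRM lam θref θ x y')) := by
  simp [rlhfGrad, hx]

variable [Nonempty Y]

lemma tabPolicyFDeriv_rlhfGrad_le {S : Finset X} {x : X} (hx : x ∈ S) {rRM : X → Y → ℝ}
    (hr : ∀ y, rRM x y ∈ Set.Icc (-1 : ℝ) 1) {lam : ℝ} (hlam : 0 ≤ lam)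
    {θref : EuclideanSpace ℝ (Y × X)} {m : ℝ} (hm0 : 0 < m) (hm : ∀ y, m ≤ tabPolicy θref x y)
    (θ : EuclideanSpace ℝ (Y × X)) (y : Y) :
    tabPolicyFDeriv θ x y (rlhfGrad S rRM lam θref θ) ≤
      (S.card : ℝ)⁻¹ * (4 + 2 * lam * log (1 / m)) * tabPolicy θ x y := by
  set g := rlhfScore rRM lam θref θ x
  have hsum : ∑ y', tabPolicy θ x y' * rlhfGrad S rRM lam θref θ (y', x) =
      (S.card : ℝ)⁻¹ * ∑ y', tabPolicy θ x y' ^ 2 *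
        (g y' - ∑ y'', tabPolicy θ x y'' * g y'') := by
    rw [mul_sum]
    exact sum_congr rfl fun y' _ => by rw [rlhfGrad_apply_of_mem hx]; ring
  have hrate : tabPolicyFDeriv θ x y (rlhfGrad S rRM lam θref θ) =
      (S.card : ℝ)⁻¹ * softmaxLogRate (tabPolicy θ x) g y * tabPolicy θ x y := by
    rw [tabPolicyFDeriv_apply, hsum, rlhfGrad_apply_of_mem hx, softmaxLogRate]
    ring
  have hle : softmaxLogRate (tabPolicy θ x) g y ≤ 4 + 2 * lam * log (1 / m) :=
    softmaxLogRate_le hlam (tabPolicy_pos θ x) (sum_tabPolicy θ x) (tabPolicy_pos θref x)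
      (sum_tabPolicy θref x) hm0 hm hr y
  rw [hrate]
  exact mul_le_mul_of_nonneg_right (mul_le_mul_of_nonneg_left hle (by positivity))
    (tabPolicy_pos θ x y).le

variable [Fintype X]

/-- Differentiate `π_θ(y|x)` written as `exp (θ (y, x) - log ∑_{y'} exp (θ (y', x)))`. -/
lemma hasFDerivAt_tabPolicy (θ : EuclideanSpace ℝ (Y × X)) (x : X) (y : Y) :
    HasFDerivAt (fun θ => tabPolicy θ x y) (tabPolicyFDeriv θ x y) θ := by
  have hlogZ := (HasFDerivAt.fun_sum fun y' _ =>
    (EuclideanSpace.proj (𝕜 := ℝ) (y', x)).hasFDerivAt.exp (x := θ)).log (sum_exp_pos θ x).ne'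
  have h : HasFDerivAt (fun θ' => exp (θ' (y, x) - log (∑ y', exp (θ' (y', x)))))
      (exp (θ (y, x) - log (∑ y', exp (θ (y', x)))) • (EuclideanSpace.proj (y, x) -
        (∑ y', exp (θ (y', x)))⁻¹ • ∑ y', exp (θ (y', x)) • EuclideanSpace.proj (y', x))) θ :=
    ((EuclideanSpace.proj (y, x)).hasFDerivAt.fun_sub hlogZ).exp
  have hfun : (fun θ' : EuclideanSpace ℝ (Y × X) => tabPolicy θ' x y) =
      fun θ' => exp (θ' (y, x) - log (∑ y', exp (θ' (y', x)))) := by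
    funext θ'
    rw [exp_sub, exp_log (sum_exp_pos θ' x), tabPolicy]
  rw [hfun]
  refine h.congr_fderiv ?_
  rw [exp_sub, exp_log (sum_exp_pos θ x), tabPolicyFDeriv, smul_sum]
  simp only [smul_smul, tabPolicy, div_eq_inv_mul]

lemma hasFDerivAt_rlhfSummand (rRM : X → Y → ℝ) (lam : ℝ) (θref θ : EuclideanSpace ℝ (Y × X))
    (x : X) :
    HasFDerivAt (fun θ => ∑ y, tabPolicy θ x y * rRM x y -
        lam * ∑ y, tabPolicy θ x y * log (tabPolicy θ x y / tabPolicy θref x y))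
      (∑ y, rlhfScore rRM lam θref θ x y • tabPolicyFDeriv θ x y) θ := by
  have hreward := HasFDerivAt.fun_sum (u := univ) fun y _ =>
    (hasFDerivAt_tabPolicy θ x y).mul_const (rRM x y)
  have hkl := HasFDerivAt.fun_sum (u := univ) fun y _ =>
    (hasDerivAt_mul_log_div (tabPolicy_pos θ x y) (tabPolicy_pos θref x y)).comp_hasFDerivAt θ
      (hasFDerivAt_tabPolicy θ x y)
  refine (hreward.sub (hkl.const_mul lam)).congr_fderiv ?_
  simp only [rlhfScore, smul_sum, smul_smul, ← sum_sub_distrib, ← sub_smul]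

lemma hasGradientAt_rlhfObjTab (S : Finset X) (rRM : X → Y → ℝ) (lam : ℝ)
    (θref θ : EuclideanSpace ℝ (Y × X)) :
    HasGradientAt (rlhfObjTab S rRM lam θref) (rlhfGrad S rRM lam θref θ) θ := by
  rw [hasGradientAt_iff_hasFDerivAt]
  refine ((HasFDerivAt.fun_sum fun x _ => hasFDerivAt_rlhfSummand rRM lam θref θ x).const_mul
    (S.card : ℝ)⁻¹).congr_fderiv ?_
  ext v
  rw [InnerProductSpace.toDual_apply_apply, PiLp.inner_apply, Fintype.sum_prod_type_right,
    ← sum_subset (subset_univ S) fun x _ hx => by simp [rlhfGrad, hx], smul_apply, _root_.sum_apply,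
    smul_eq_mul, mul_sum]
  refine sum_congr rfl fun x hx => ?_
  rw [_root_.sum_apply]
  simp only [smul_apply, tabPolicyFDeriv_apply, smul_eq_mul, sum_mul_mul_sub_sum_mul_comm, mul_sum,
    rlhfGrad_apply_of_mem hx, RCLike.inner_apply, conj_trivial]
  exact sum_congr rfl fun y _ => by ring

end TabularPolicy

theorem kl_prob_upper_bound_general {X Y : Type*} [Fintype X] [Fintype Y] [Nonempty Y]
    (rRM : X → Y → ℝ) (hrRM : ∀ x y, rRM x y ∈ Set.Icc (-1 : ℝ) 1)
    (lam : ℝ) (hlam : 0 ≤ lam)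
    (S : Finset X)
    (θref : EuclideanSpace ℝ (Y × X))
    (θ : ℝ → EuclideanSpace ℝ (Y × X)) (hθ0 : θ 0 = θref)
    (hflow : ∀ t : ℝ, 0 ≤ t →
      HasDerivAt θ (gradient (rlhfObjTab S rRM lam θref) (θ t)) t)
    (x : X) (hx : x ∈ S) (A : Finset Y) (T : ℝ) (hT : 0 ≤ T) :
    ∑ y ∈ A, tabPolicy (θ T) x y ≤
      (∑ y ∈ A, tabPolicy (θ 0) x y) *
        Real.exp ((S.card : ℝ)⁻¹ *
          (4 + 2 * lam * Real.log (1 / Finset.univ.inf' Finset.univ_nonempty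
            (fun y => tabPolicy (θ 0) x y))) * T) := by
  set m := univ.inf' univ_nonempty fun y => tabPolicy (θ 0) x y
  have hm0 : 0 < m := (lt_inf'_iff _).mpr fun y _ => tabPolicy_pos _ x y
  have hm : ∀ y, m ≤ tabPolicy θref x y := fun y => hθ0 ▸ inf'_le _ (mem_univ y)
  refine le_mul_exp_of_hasDerivAt_le_mul (f := fun t => ∑ y ∈ A, tabPolicy (θ t) x y)
    (f' := fun t => ∑ y ∈ A, tabPolicyFDeriv (θ t) x y (rlhfGrad S rRM lam θref (θ t)))
    (fun t ht => ?_) (fun t _ => ?_) hT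
  · have hθt : HasDerivAt θ (rlhfGrad S rRM lam θref (θ t)) t :=
      (hasGradientAt_rlhfObjTab S rRM lam θref (θ t)).gradient ▸ hflow t ht
    exact HasDerivAt.fun_sum fun y _ => (hasFDerivAt_tabPolicy (θ t) x y).comp_hasDerivAt t hθt
  · rw [mul_sum]
    exact sum_le_sum fun y _ =>
      tabPolicyFDeriv_rlhfGrad_le hx (hrRM x) hlam hm0 hm (θ t) y

/-- Lemma (probability growth bound under gradient flow): for a tabular policy trained via
gradient flow on the RLHF objective, for any prompt `x ∈ S`, subset `A ⊆ Y`, and `T ≥ 0`: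
`π_{θ(T)}(A|x) ≤ π_{θ(0)}(A|x) · exp((1/|S|)(4 + 2λ ln(1/min_y π_{θ(0)}(y|x))) T)`. -/
theorem kl_prob_upper_bound {X Y : Type*} [Fintype X] [Fintype Y] [Nonempty Y]
    (rRM : X → Y → ℝ) (hrRM : ∀ x y, rRM x y ∈ Set.Icc (-1 : ℝ) 1)
    (lam : ℝ) (hlam : 0 ≤ lam)
    (S : Finset X) (hS : S.Nonempty)
    (θref : EuclideanSpace ℝ (Y × X))
    (θ : ℝ → EuclideanSpace ℝ (Y × X)) (hθ0 : θ 0 = θref)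
    (hflow : ∀ t : ℝ, 0 ≤ t →
      HasDerivAt θ (gradient (rlhfObjTab S rRM lam θref) (θ t)) t)
    (x : X) (hx : x ∈ S) (A : Finset Y) (T : ℝ) (hT : 0 ≤ T) :
    ∑ y ∈ A, tabPolicy (θ T) x y ≤
      (∑ y ∈ A, tabPolicy (θ 0) x y) *
        Real.exp ((S.card : ℝ)⁻¹ *
          (4 + 2 * lam * Real.log (1 / Finset.univ.inf' Finset.univ_nonempty
            (fun y => tabPolicy (θ 0) x y))) * T) :=
  kl_prob_upper_bound_general rRM hrRM lam hlam S θref θ hθ0 hflow x hx A T hT
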